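/- arXiv:2407.16914 — 7 statements merged into one kernel-verified Lean document; each statement's English description precedes it below -/
import Mathlib

section
/- Let n be a positive integer and let φ : {0,1}^n → ℝ be an arbitrary function. Then there exist a natural number N = 2^n − n − 1, a matrix W ∈ ℝ^{N×n}, vectors b, w ∈ ℝ^N, a vector D ∈ ℝ^n, and a scalar c ∈ ℝ such that for every x ∈ {0,1}^n, φ(x) = Σ_{j=1}^{N} w_j · max((W x + b)_j, 0) + D^T x + c. (That is, every function on the binary hypercube is exactly represented by a one-hidden-layer ReLU neural network with 2^n − n − 1 hidden neurons and a linear passthrough term.) -/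
open Finset

variable {n : ℕ}

noncomputable def chi (U : Finset (Fin n)) : Fin n → ℝ := fun i => if i ∈ U then 1 else 0

noncomputable def coeffA (φ : (Fin n → ℝ) → ℝ) (S : Finset (Fin n)) : ℝ :=
  ∑ T ∈ S.powerset, (-1 : ℝ) ^ (S \ T).card * φ (chi T)

lemma neg_one_pow_sum (A : Finset (Fin n)) :
    (∑ R ∈ A.powerset, (-1 : ℝ) ^ R.card) = if A = ∅ then 1 else 0 := by
  have := Finset.sum_powerset_neg_one_pow_card (x := A)
  have h2 : ((∑ m ∈ A.powerset, (-1 : ℤ) ^ m.card : ℤ) : ℝ)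
      = ∑ R ∈ A.powerset, (-1 : ℝ) ^ R.card := by push_cast; ring_nf
  rw [← h2, this]
  split <;> simp

lemma mobius (φ : (Fin n → ℝ) → ℝ) (U : Finset (Fin n)) :
    ∑ S ∈ U.powerset, coeffA φ S = φ (chi U) := by
  unfold coeffA
  have swap : ∑ S ∈ U.powerset, ∑ T ∈ S.powerset, (-1 : ℝ) ^ (S \ T).card * φ (chi T)
      = ∑ T ∈ U.powerset, ∑ S ∈ U.powerset.filter (T ⊆ ·), (-1 : ℝ) ^ (S \ T).card * φ (chi T) := by
    have h1 : ∀ S ∈ U.powerset,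
        ∑ T ∈ S.powerset, (-1 : ℝ) ^ (S \ T).card * φ (chi T)
        = ∑ T ∈ U.powerset, if T ⊆ S then (-1 : ℝ) ^ (S \ T).card * φ (chi T) else 0 := by
      intro S hS
      rw [Finset.sum_ite, Finset.sum_const_zero, add_zero]
      apply Finset.sum_congr
      · ext T
        simp only [mem_powerset, mem_filter, mem_powerset] at *
        exact ⟨fun h => ⟨h.trans hS, h⟩, fun h => h.2⟩
      · intros; rfl
    rw [Finset.sum_congr rfl h1, Finset.sum_comm]
    apply Finset.sum_congr rfl
    intro T _
    rw [Finset.sum_ite, Finset.sum_const_zero, add_zero]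
  rw [swap]
  have h2 : ∀ T ∈ U.powerset,
      ∑ S ∈ U.powerset.filter (T ⊆ ·), (-1 : ℝ) ^ (S \ T).card * φ (chi T)
      = (if T = U then 1 else 0) * φ (chi T) := by
    intro T hT
    rw [mem_powerset] at hT
    rw [← Finset.sum_mul]
    congr 1
    have key : ∑ S ∈ U.powerset.filter (T ⊆ ·), (-1 : ℝ) ^ (S \ T).card
        = ∑ R ∈ (U \ T).powerset, (-1 : ℝ) ^ R.card := by
      apply Finset.sum_nbij' (i := fun S => S \ T) (j := fun R => T ∪ R)
      · intro S hS
        simp only [mem_filter, mem_powerset] at hS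
        simp only [mem_powerset]
        exact sdiff_subset_sdiff hS.1 le_rfl
      · intro R hR
        simp only [mem_powerset] at hR
        simp only [mem_filter, mem_powerset]
        exact ⟨union_subset hT (hR.trans (sdiff_subset)), subset_union_left⟩
      · intro S hS
        simp only [mem_filter, mem_powerset] at hS
        rw [union_sdiff_of_subset hS.2]
      · intro R hR
        simp only [mem_powerset] at hR
        rw [union_sdiff_cancel_left]
        exact disjoint_of_subset_right hR disjoint_sdiff
      · intros; rfl
    rw [key, neg_one_pow_sum]
    congr 1
    simp only [Finset.sdiff_eq_empty_iff_subset, eq_iff_iff]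
    exact ⟨fun h => subset_antisymm hT h, fun h => h ▸ le_rfl⟩
  rw [Finset.sum_congr rfl h2]
  simp only [ite_mul, one_mul, zero_mul]
  rw [Finset.sum_ite_eq' U.powerset U (fun T => φ (chi T))]
  simp

lemma card_subtype_two_le (n : ℕ) :
    Fintype.card {S : Finset (Fin n) // 2 ≤ S.card} = 2 ^ n - n - 1 := by
  classical
  rw [Fintype.card_subtype]
  have htot : (univ : Finset (Finset (Fin n))).card = 2 ^ n := by
    simp [Finset.card_univ]
  have hsplit := Finset.card_filter_add_card_filter_not
    (s := (univ : Finset (Finset (Fin n)))) (p := fun S => 2 ≤ S.card)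
  have hneg : (univ.filter fun S : Finset (Fin n) => ¬ 2 ≤ S.card).card = n + 1 := by
    have h1 : (univ.filter fun S : Finset (Fin n) => ¬ 2 ≤ S.card)
        = (univ.filter fun S : Finset (Fin n) => S.card = 0)
          ∪ (univ.filter fun S : Finset (Fin n) => S.card = 1) := by
      ext S
      simp only [mem_filter, mem_union, mem_univ, true_and]
      omega
    have h0 : (univ.filter fun S : Finset (Fin n) => S.card = 0)
        = (univ : Finset (Fin n)).powersetCard 0 := by
      rw [Finset.powersetCard_eq_filter, Finset.powerset_univ]
    have h1' : (univ.filter fun S : Finset (Fin n) => S.card = 1)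
        = (univ : Finset (Fin n)).powersetCard 1 := by
      rw [Finset.powersetCard_eq_filter, Finset.powerset_univ]
    rw [h1, Finset.card_union_of_disjoint, h0, h1', Finset.card_powersetCard,
      Finset.card_powersetCard]
    · simp [Nat.choose_one_right]; omega
    · rw [Finset.disjoint_filter]
      intro S _ h
      omega
  omega

lemma binary_dot (S U : Finset (Fin n)) :
    (∑ i, (if i ∈ S then (1 : ℝ) else 0) * chi U i) = ((S ∩ U).card : ℝ) := by
  have : ∀ i, (if i ∈ S then (1 : ℝ) else 0) * chi U i = if i ∈ S ∩ U then 1 else 0 := by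
    intro i
    simp only [chi, Finset.mem_inter]
    by_cases h1 : i ∈ S <;> by_cases h2 : i ∈ U <;> simp [h1, h2]
  simp only [this]
  rw [Finset.sum_ite_mem, Finset.univ_inter, Finset.sum_const]
  simp

lemma relu_ind (S U : Finset (Fin n)) :
    max (((S ∩ U).card : ℝ) + (1 - S.card)) 0 = if S ⊆ U then 1 else 0 := by
  by_cases h : S ⊆ U
  · rw [if_pos h, Finset.inter_eq_left.mpr h]
    have : ((S.card : ℝ) + (1 - S.card)) = 1 := by ring
    rw [this]
    norm_num
  · rw [if_neg h]
    have hlt : (S ∩ U).card < S.card := by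
      apply Finset.card_lt_card
      constructor
      · exact Finset.inter_subset_left
      · intro hle
        exact h (Finset.inter_eq_left.mp (le_antisymm Finset.inter_subset_left hle))
    have : (((S ∩ U).card : ℝ) + (1 - S.card)) ≤ 0 := by
      have : ((S ∩ U).card : ℝ) + 1 ≤ S.card := by exact_mod_cast hlt
      linarith
    exact max_eq_right this

/-- Every function on the binary hypercube `{0,1}^n` is exactly represented by a
one-hidden-layer ReLU neural network with `2^n - n - 1` hidden neurons and a linear
passthrough term. -/
theorem gnn_universal_approximation (n : ℕ) (hn : 1 ≤ n) (φ : (Fin n → ℝ) → ℝ) :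
    ∃ (W : Matrix (Fin (2 ^ n - n - 1)) (Fin n) ℝ) (b w : Fin (2 ^ n - n - 1) → ℝ)
      (D : Fin n → ℝ) (c : ℝ),
      ∀ x : Fin n → ℝ, (∀ i, x i = 0 ∨ x i = 1) →
        φ x = (∑ j, w j * max ((W.mulVec x + b) j) 0) + (∑ i, D i * x i) + c := by
  classical
  let e : {S : Finset (Fin n) // 2 ≤ S.card} ≃ Fin (2 ^ n - n - 1) :=
    Fintype.equivFinOfCardEq (card_subtype_two_le n)
  refine ⟨fun j i => if i ∈ (e.symm j).1 then 1 else 0,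
    fun j => 1 - ((e.symm j).1.card : ℝ),
    fun j => coeffA φ (e.symm j).1,
    fun i => coeffA φ {i}, coeffA φ ∅, ?_⟩
  intro x hx
  set U := univ.filter (fun i => x i = 1) with hU
  have hxU : x = chi U := by
    funext i
    simp only [chi, hU, mem_filter, mem_univ, true_and]
    rcases hx i with h | h <;> simp [h]
  -- the LHS as a sum over all subsets
  have hmain : φ x = ∑ S ∈ (univ : Finset (Finset (Fin n))),
      coeffA φ S * (if S ⊆ U then 1 else 0) := by
    rw [hxU, ← mobius φ U]
    simp only [mul_ite, mul_one, mul_zero]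
    rw [Finset.sum_ite, Finset.sum_const_zero, add_zero]
    apply Finset.sum_congr
    · ext S; simp [Finset.mem_powerset]
    · intros; rfl
  have hneur : (∑ j : Fin (2 ^ n - n - 1), coeffA φ (e.symm j).1 *
      max ((∑ i, (if i ∈ (e.symm j).1 then (1:ℝ) else 0) * x i) + (1 - ((e.symm j).1.card : ℝ))) 0)
      = ∑ S ∈ univ.filter (fun S : Finset (Fin n) => 2 ≤ S.card),
          coeffA φ S * (if S ⊆ U then 1 else 0) := by
    have hsub : (∑ S : {S : Finset (Fin n) // 2 ≤ S.card}, coeffA φ S.1 * (if S.1 ⊆ U then 1 else 0))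
        = ∑ S ∈ univ.filter (fun S : Finset (Fin n) => 2 ≤ S.card),
            coeffA φ S * (if S ⊆ U then 1 else 0) := by
      rw [Finset.sum_subtype (p := fun S : Finset (Fin n) => 2 ≤ S.card)
        (univ.filter fun S : Finset (Fin n) => 2 ≤ S.card)
        (by intro S; simp) (fun S => coeffA φ S * (if S ⊆ U then 1 else 0))]
    rw [← hsub, ← e.symm.sum_comp (fun S => coeffA φ S.1 * (if S.1 ⊆ U then 1 else 0))]
    apply Finset.sum_congr rfl
    intro j _
    congr 1
    have hdot : (∑ i, (if i ∈ (e.symm j).1 then (1:ℝ) else 0) * x i)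
        = (((e.symm j).1 ∩ U).card : ℝ) := by
      rw [hxU]; exact binary_dot _ _
    rw [hdot, relu_ind]
  have hD : (∑ i, coeffA φ {i} * x i)
      = ∑ S ∈ univ.filter (fun S : Finset (Fin n) => S.card = 1),
          coeffA φ S * (if S ⊆ U then 1 else 0) := by
    have himg : univ.filter (fun S : Finset (Fin n) => S.card = 1)
        = univ.image (fun i : Fin n => ({i} : Finset (Fin n))) := by
      ext S
      simp only [mem_filter, mem_univ, true_and, mem_image, Finset.card_eq_one]
      tauto
    rw [himg, Finset.sum_image (by intro a _ b _ h; exact Finset.singleton_injective h)]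
    apply Finset.sum_congr rfl
    intro i _
    congr 1
    rw [hxU]
    simp only [chi, Finset.singleton_subset_iff]
  have hC : (∑ S ∈ univ.filter (fun S : Finset (Fin n) => S.card = 0),
      coeffA φ S * (if S ⊆ U then 1 else 0)) = coeffA φ ∅ := by
    have h0 : univ.filter (fun S : Finset (Fin n) => S.card = 0) = {∅} := by
      ext S; simp [Finset.card_eq_zero]
    rw [h0]
    simp
  have hsplit : ∑ S ∈ (univ : Finset (Finset (Fin n))), coeffA φ S * (if S ⊆ U then 1 else 0)
      = (∑ S ∈ univ.filter (fun S : Finset (Fin n) => 2 ≤ S.card),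
            coeffA φ S * (if S ⊆ U then 1 else 0))
        + (∑ S ∈ univ.filter (fun S : Finset (Fin n) => S.card = 1),
            coeffA φ S * (if S ⊆ U then 1 else 0))
        + (∑ S ∈ univ.filter (fun S : Finset (Fin n) => S.card = 0),
            coeffA φ S * (if S ⊆ U then 1 else 0)) := by
    rw [← Finset.sum_filter_add_sum_filter_not (univ : Finset (Finset (Fin n)))
      (fun S => 2 ≤ S.card)]
    rw [← Finset.sum_filter_add_sum_filter_not
      (univ.filter fun S : Finset (Fin n) => ¬ 2 ≤ S.card) (fun S => S.card = 1),
      Finset.filter_filter, Finset.filter_filter, add_assoc]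
    congr 2
    · exact Finset.sum_congr
        (by ext S; simp only [mem_filter, mem_univ, true_and]; omega) (fun _ _ => rfl)
    · exact Finset.sum_congr
        (by ext S; simp only [mem_filter, mem_univ, true_and]; omega) (fun _ _ => rfl)
  rw [hmain, hsplit, hC, ← hD, ← hneur]
  rfl
end

section
/- Let K ≥ 2 be an integer and N ≥ 1 a real number. Consider the optimization problem: maximize Σ_{k=2}^{K} n_k n_{k−1} + n_K over real variables n_1, …, n_K satisfying n_k ≥ 0 for all k and Σ_{k=1}^{K} n_k = N. Then (N+1)²/4 is the greatest value of the objective over the feasible set, and it is attained at the feasible point with n_k = 0 for all k ≤ K−2, n_{K−1} = (N−1)/2, and n_K = (N+1)/2. -/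
open Finset

/- The path 1 - 2 - ⋯ - K is bipartite, so splitting the indices by parity into parts of total
weight A (the part containing K) and B gives Σ y_k y_{k-1} ≤ A B and y_K ≤ A. Hence the objective
is at most A (B + 1) ≤ ((A + B + 1) / 2)² = (N + 1)² / 4 by AM-GM. -/

/-- The two parts are built inductively: appending `y (K + 1)` swaps their roles. -/
theorem exists_parts_sum_adjacent_mul_le_mul (y : ℕ → ℝ) {K : ℕ} (hK : 1 ≤ K)
    (hy : ∀ k ∈ Icc 1 K, 0 ≤ y k) :
    ∃ A B : ℝ, 0 ≤ B ∧ A + B = ∑ k ∈ Icc 1 K, y k ∧ y K ≤ A ∧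
      ∑ k ∈ Icc 2 K, y k * y (k - 1) ≤ A * B := by
  induction K, hK using Nat.le_induction with
  | base => exact ⟨y 1, 0, le_rfl, by simp, le_rfl, by simp⟩
  | succ K hK ih =>
    obtain ⟨A, B, hB, hsum, hyK, hprod⟩ :=
      ih fun k hk => hy k (Icc_subset_Icc_right K.le_succ hk)
    have hyK1 : 0 ≤ y (K + 1) := hy _ (right_mem_Icc.2 (by omega))
    refine ⟨B + y (K + 1), A, hyK.trans' (hy K (mem_Icc.2 ⟨hK, by omega⟩)), ?_, by linarith, ?_⟩
    · rw [sum_Icc_succ_top (by omega), ← hsum]; ring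
    · rw [sum_Icc_succ_top (by omega), Nat.add_sub_cancel]
      linarith [mul_le_mul_of_nonneg_left hyK hyK1]

theorem sum_adjacent_mul_add_last_le (y : ℕ → ℝ) {K : ℕ} (hK : 1 ≤ K) {N : ℝ}
    (hy : ∀ k ∈ Icc 1 K, 0 ≤ y k) (hsum : ∑ k ∈ Icc 1 K, y k = N) :
    ∑ k ∈ Icc 2 K, y k * y (k - 1) + y K ≤ (N + 1) ^ 2 / 4 := by
  obtain ⟨A, B, -, hAB, hyK, hprod⟩ := exists_parts_sum_adjacent_mul_le_mul y hK hy
  rw [← hsum, ← hAB]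
  nlinarith [sq_nonneg (A - B - 1)]

theorem sum_Icc_eq_of_supported_top_two (x : ℕ → ℝ) (m : ℕ) (hx : ∀ k ≤ m, x k = 0) :
    ∑ k ∈ Icc 1 (m + 2), x k = x (m + 1) + x (m + 2) := by
  rw [sum_Icc_succ_top (by omega), sum_Icc_succ_top (by omega),
    sum_eq_zero fun k hk => hx k (mem_Icc.1 hk).2, zero_add]

theorem sum_adjacent_mul_eq_of_supported_top_two (x : ℕ → ℝ) (m : ℕ) (hx : ∀ k ≤ m, x k = 0) :
    ∑ k ∈ Icc 2 (m + 2), x k * x (k - 1) = x (m + 2) * x (m + 1) := by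
  rw [sum_Icc_succ_top (by omega), sum_eq_zero fun k hk => by
    rw [hx (k - 1) (by have := mem_Icc.1 hk; omega), mul_zero], zero_add]
  rfl

/-- For `K ≥ 2` and a real `N ≥ 1`, the greatest value of
`Σ_{k=2}^K n_k n_{k-1} + n_K` over nonnegative reals `n_1, …, n_K` summing to `N`
is `(N+1)^2/4`, attained at `n_k = 0` for `k ≤ K-2`, `n_{K-1} = (N-1)/2`, `n_K = (N+1)/2`. -/
theorem qp_max_real (K : ℕ) (hK : 2 ≤ K) (N : ℝ) (hN : 1 ≤ N)
    (x : ℕ → ℝ)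
    (hxdef : ∀ k, x k = if k = K then (N + 1) / 2 else if k = K - 1 then (N - 1) / 2 else 0) :
    IsGreatest
      {v : ℝ | ∃ y : ℕ → ℝ, (∀ k ∈ Finset.Icc 1 K, 0 ≤ y k) ∧
        (∑ k ∈ Finset.Icc 1 K, y k) = N ∧
        v = (∑ k ∈ Finset.Icc 2 K, y k * y (k - 1)) + y K}
      ((N + 1) ^ 2 / 4) ∧
    (∀ k ∈ Finset.Icc 1 K, 0 ≤ x k) ∧
    (∑ k ∈ Finset.Icc 1 K, x k) = N ∧
    (∑ k ∈ Finset.Icc 2 K, x k * x (k - 1)) + x K = (N + 1) ^ 2 / 4 := by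
  obtain ⟨m, rfl⟩ : ∃ m, K = m + 2 := ⟨K - 2, by omega⟩
  have htop : x (m + 2) = (N + 1) / 2 := by simp [hxdef]
  have hnext : x (m + 1) = (N - 1) / 2 := by simp [hxdef]
  have hlow : ∀ k ≤ m, x k = 0 := fun k hk => by
    rw [hxdef, if_neg (by omega), if_neg (by omega)]
  have hx0 : ∀ k ∈ Icc 1 (m + 2), 0 ≤ x k := fun k _ => by
    rw [hxdef]; split_ifs <;> linarith
  have hxsum : ∑ k ∈ Icc 1 (m + 2), x k = N := by
    rw [sum_Icc_eq_of_supported_top_two x m hlow, htop, hnext]; ring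
  have hxval : ∑ k ∈ Icc 2 (m + 2), x k * x (k - 1) + x (m + 2) = (N + 1) ^ 2 / 4 := by
    rw [sum_adjacent_mul_eq_of_supported_top_two x m hlow, htop, hnext]; ring
  refine ⟨⟨⟨x, hx0, hxsum, hxval.symm⟩, ?_⟩, hx0, hxsum, hxval⟩
  rintro v ⟨y, hy, hysum, rfl⟩
  exact sum_adjacent_mul_add_last_le y (by omega) hy hysum
end

section
/- Let K ≥ 2 be an integer and N ≥ 1 an odd natural number. Over nonnegative integer variables n_1, …, n_K satisfying Σ_{k=1}^{K} n_k = N, the greatest value of Σ_{k=2}^{K} n_k n_{k−1} + n_K is (N+1)²/4, attained at n_k = 0 for all k ≤ K−2, n_{K−1} = (N−1)/2, and n_K = (N+1)/2. -/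
/-!
Split the variables into the alternate ones ending with `n_K`, with total `a`, and the
others, with total `b`. Every adjacent product `n_k n_{k-1}` then occurs in the expansion of
`a * b`, so the objective is at most `a * b + a = a * (b + 1) ≤ (a + b + 1)² / 4 = (N + 1)² / 4`
by AM-GM; for odd `N` the bound is met with `a = (N + 1) / 2` and `b = (N - 1) / 2`.
-/

open Finset

section

variable {R : Type*} [CommSemiring R] [PartialOrder R] [CanonicallyOrderedAdd R]

theorem exists_split_sum_Icc_adjacent_le (y : ℕ → R) {K : ℕ} (hK : 1 ≤ K) :
    ∃ a b : R, a + b = ∑ k ∈ Icc 1 K, y k ∧ y K ≤ a ∧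
      ∑ k ∈ Icc 2 K, y k * y (k - 1) ≤ a * b := by
  induction K, hK using Nat.le_induction with
  | base => exact ⟨y 1, 0, by simp, le_rfl, by simp⟩
  | succ K hK ih =>
    obtain ⟨a, b, hsum, hlast, hadj⟩ := ih
    refine ⟨b + y (K + 1), a, ?_, le_add_self, ?_⟩
    · rw [sum_Icc_succ_top (by omega), ← hsum]
      ring
    · rw [sum_Icc_succ_top (by omega), Nat.add_sub_cancel]
      calc ∑ k ∈ Icc 2 K, y k * y (k - 1) + y (K + 1) * y K
          ≤ a * b + y (K + 1) * a := by gcongr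
        _ = (b + y (K + 1)) * a := by ring

end

theorem sum_Icc_adjacent_add_last_le {K N : ℕ} (hK : 1 ≤ K) (y : ℕ → ℕ)
    (hy : ∑ k ∈ Icc 1 K, y k = N) :
    ∑ k ∈ Icc 2 K, y k * y (k - 1) + y K ≤ (N + 1) ^ 2 / 4 := by
  obtain ⟨a, b, hsum, hlast, hadj⟩ := exists_split_sum_Icc_adjacent_le y hK
  rw [Nat.le_div_iff_mul_le four_pos]
  calc (∑ k ∈ Icc 2 K, y k * y (k - 1) + y K) * 4
      ≤ 4 * a * (b + 1) := by nlinarith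
    _ ≤ (a + (b + 1)) ^ 2 := four_mul_le_sq_add _ _
    _ = (N + 1) ^ 2 := by rw [← add_assoc, hsum, hy]

section

variable {M : Type*} [AddCommMonoid M]

theorem sum_Icc_one_add_two_of_eq_zero (y : ℕ → M) {K : ℕ} (hy : ∀ k ≤ K, y k = 0) :
    ∑ k ∈ Icc 1 (K + 2), y k = y (K + 1) + y (K + 2) := by
  rw [sum_Icc_succ_top (by omega), sum_Icc_succ_top (by omega),
    sum_eq_zero fun k hk ↦ hy k (mem_Icc.1 hk).2, zero_add]

end

theorem sum_Icc_adjacent_of_eq_zero {R : Type*} [NonUnitalNonAssocSemiring R] (y : ℕ → R)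
    {K : ℕ} (hy : ∀ k ≤ K, y k = 0) :
    ∑ k ∈ Icc 2 (K + 2), y k * y (k - 1) = y (K + 2) * y (K + 1) := by
  rw [sum_Icc_succ_top (by omega), Nat.add_sub_cancel, sum_eq_zero, zero_add]
  exact fun k hk ↦ by rw [hy (k - 1) (by grind), mul_zero]

theorem qp_max_nat_odd_general (K : ℕ) (hK : 2 ≤ K) (N : ℕ) (hodd : Odd N)
    (x : ℕ → ℕ)
    (hxdef : ∀ k, x k = if k = K then (N + 1) / 2 else if k = K - 1 then (N - 1) / 2 else 0) :
    IsGreatest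
      {v : ℕ | ∃ y : ℕ → ℕ, (∑ k ∈ Finset.Icc 1 K, y k) = N ∧
        v = (∑ k ∈ Finset.Icc 2 K, y k * y (k - 1)) + y K}
      ((N + 1) ^ 2 / 4) ∧
    (∑ k ∈ Finset.Icc 1 K, x k) = N ∧
    (∑ k ∈ Finset.Icc 2 K, x k * x (k - 1)) + x K = (N + 1) ^ 2 / 4 := by
  obtain ⟨M, rfl⟩ : ∃ M, K = M + 2 := ⟨K - 2, by omega⟩
  obtain ⟨m, rfl⟩ := hodd
  have hmax : (2 * m + 1 + 1) ^ 2 / 4 = (m + 1) ^ 2 := by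
    rw [show (2 * m + 1 + 1) ^ 2 = 4 * (m + 1) ^ 2 by ring]; simp
  have hxM : ∀ k ≤ M, x k = 0 := fun k hk ↦ by
    rw [hxdef, if_neg (by omega), if_neg (by omega)]
  have hx1 : x (M + 1) = m := by rw [hxdef, if_neg (by omega), if_pos (by omega)]; omega
  have hx2 : x (M + 2) = m + 1 := by rw [hxdef, if_pos rfl]; omega
  have hsum : ∑ k ∈ Icc 1 (M + 2), x k = 2 * m + 1 := by
    rw [sum_Icc_one_add_two_of_eq_zero x hxM, hx1, hx2]; ring
  have hval : ∑ k ∈ Icc 2 (M + 2), x k * x (k - 1) + x (M + 2) = (2 * m + 1 + 1) ^ 2 / 4 := by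
    rw [sum_Icc_adjacent_of_eq_zero x hxM, hx1, hx2, hmax]; ring
  refine ⟨⟨⟨x, hsum, hval.symm⟩, ?_⟩, hsum, hval⟩
  rintro v ⟨y, hy, rfl⟩
  exact sum_Icc_adjacent_add_last_le (by omega) y hy

/-- For `K ≥ 2` and an odd natural number `N ≥ 1`, the greatest value of
`Σ_{k=2}^K n_k n_{k-1} + n_K` over natural numbers `n_1, …, n_K` summing to `N`
is `(N+1)^2/4`, attained at `n_k = 0` for `k ≤ K-2`, `n_{K-1} = (N-1)/2`, `n_K = (N+1)/2`. -/
theorem qp_max_nat_odd (K : ℕ) (hK : 2 ≤ K) (N : ℕ) (hN : 1 ≤ N) (hodd : Odd N)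
    (x : ℕ → ℕ)
    (hxdef : ∀ k, x k = if k = K then (N + 1) / 2 else if k = K - 1 then (N - 1) / 2 else 0) :
    IsGreatest
      {v : ℕ | ∃ y : ℕ → ℕ, (∑ k ∈ Finset.Icc 1 K, y k) = N ∧
        v = (∑ k ∈ Finset.Icc 2 K, y k * y (k - 1)) + y K}
      ((N + 1) ^ 2 / 4) ∧
    (∑ k ∈ Finset.Icc 1 K, x k) = N ∧
    (∑ k ∈ Finset.Icc 2 K, x k * x (k - 1)) + x K = (N + 1) ^ 2 / 4 :=
  qp_max_nat_odd_general K hK N hodd x hxdef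
end

section
/- Let K ≥ 2 be an integer and N an even natural number. Over nonnegative integer variables n_1, …, n_K satisfying Σ_{k=1}^{K} n_k = N, the greatest value of Σ_{k=2}^{K} n_k n_{k−1} + n_K is N(N+2)/4, attained at n_k = 0 for all k ≤ K−2 and n_{K−1} = n_K = N/2. -/
/-!
Every product `n k * n (k - 1)` pairs an even index with an odd one, so the quadratic part is at
most `E * O`, where `E` and `O` are the sums of `n` over the even and the odd indices. The last
term `n K` is at most the class sum `A ∈ {E, O}` containing `K`; writing `B` for the other one,
the objective is at most `A * (B + 1)` with `A + (B + 1) = N + 1`, hence at most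
`(N / 2) * (N / 2 + 1) = N * (N + 2) / 4`.
-/

open Finset

theorem mul_le_of_add_eq_two_mul_add_one {a b m : ℕ} (h : a + b = 2 * m + 1) :
    a * b ≤ m * (m + 1) := by
  rcases le_or_gt a m with ha | ha <;> nlinarith

theorem le_sum_Icc_filter (y : ℕ → ℕ) {p : ℕ → Prop} [DecidablePred p] {K : ℕ} (hK : 1 ≤ K)
    (hp : p K) : y K ≤ ∑ k ∈ Icc 1 K with p k, y k :=
  single_le_sum (fun _ _ => Nat.zero_le _) (mem_filter.2 ⟨mem_Icc.2 ⟨hK, le_rfl⟩, hp⟩)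

theorem sum_mul_pred_le_even_mul_odd (y : ℕ → ℕ) (K : ℕ) :
    ∑ k ∈ Icc 2 K, y k * y (k - 1) ≤
      (∑ k ∈ Icc 1 K with Even k, y k) * ∑ k ∈ Icc 1 K with Odd k, y k := by
  induction K with
  | zero => simp
  | succ K ih =>
    rcases Nat.eq_zero_or_pos K with rfl | hK
    · simp
    rw [sum_Icc_succ_top (by omega), ← insert_Icc_right_eq_Icc_add_one (by omega),
      filter_insert, filter_insert, Nat.add_sub_cancel]
    rcases Nat.even_or_odd K with hKe | hKo
    · have hy := le_sum_Icc_filter y hK hKe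
      have hK1 : ¬Even (K + 1) := Nat.not_even_iff_odd.2 hKe.add_one
      rw [if_neg hK1, if_pos hKe.add_one, sum_insert (by simp)]
      nlinarith
    · have hy := le_sum_Icc_filter y hK hKo
      have hK1 : ¬Odd (K + 1) := Nat.not_odd_iff_even.2 hKo.add_one
      rw [if_pos hKo.add_one, if_neg hK1, sum_insert (by simp)]
      nlinarith

theorem sum_Icc_one_eq_of_eq_zero {y : ℕ → ℕ} {K : ℕ} (hK : 2 ≤ K)
    (hy : ∀ k ≤ K - 2, y k = 0) : ∑ k ∈ Icc 1 K, y k = y (K - 1) + y K := by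
  obtain ⟨J, rfl⟩ : ∃ J, K = J + 2 := ⟨K - 2, by omega⟩
  rw [sum_Icc_succ_top (by omega), sum_Icc_succ_top (by omega),
    sum_eq_zero fun k hk => hy k (by simp at hk; omega)]
  simp

theorem sum_Icc_two_mul_pred_eq_of_eq_zero {y : ℕ → ℕ} {K : ℕ} (hK : 2 ≤ K)
    (hy : ∀ k ≤ K - 2, y k = 0) : ∑ k ∈ Icc 2 K, y k * y (k - 1) = y K * y (K - 1) := by
  obtain ⟨J, rfl⟩ : ∃ J, K = J + 2 := ⟨K - 2, by omega⟩
  rw [sum_Icc_succ_top (by omega),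
    sum_eq_zero fun k hk => by rw [hy (k - 1) (by simp at hk; omega), mul_zero]]
  simp

theorem sum_Icc_mul_pred_add_le {y : ℕ → ℕ} {K m : ℕ} (hK : 1 ≤ K)
    (hy : ∑ k ∈ Icc 1 K, y k = 2 * m) :
    ∑ k ∈ Icc 2 K, y k * y (k - 1) + y K ≤ m * (m + 1) := by
  set E := ∑ k ∈ Icc 1 K with Even k, y k
  set O := ∑ k ∈ Icc 1 K with Odd k, y k
  have hEO : E + O = 2 * m := by
    rw [← hy, ← sum_filter_add_sum_filter_not (Icc 1 K) Even y]
    simp only [E, O, Nat.not_even_iff_odd]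
  have hprod := sum_mul_pred_le_even_mul_odd y K
  rcases Nat.even_or_odd K with hKe | hKo
  · have hyK := le_sum_Icc_filter y hK hKe
    calc _ ≤ E * (O + 1) := by rw [mul_add_one]; exact add_le_add hprod hyK
      _ ≤ m * (m + 1) := mul_le_of_add_eq_two_mul_add_one (by omega)
  · have hyK := le_sum_Icc_filter y hK hKo
    calc _ ≤ O * (E + 1) := by rw [mul_add_one, mul_comm O]; exact add_le_add hprod hyK
      _ ≤ m * (m + 1) := mul_le_of_add_eq_two_mul_add_one (by omega)

/-- For `K ≥ 2` and an even natural number `N`, the greatest value of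
`Σ_{k=2}^K n_k n_{k-1} + n_K` over natural numbers `n_1, …, n_K` summing to `N`
is `N(N+2)/4`, attained at `n_k = 0` for `k ≤ K-2` and `n_{K-1} = n_K = N/2`. -/
theorem qp_max_nat_even (K : ℕ) (hK : 2 ≤ K) (N : ℕ) (heven : Even N)
    (x : ℕ → ℕ)
    (hxdef : ∀ k, x k = if k = K then N / 2 else if k = K - 1 then N / 2 else 0) :
    IsGreatest
      {v : ℕ | ∃ y : ℕ → ℕ, (∑ k ∈ Finset.Icc 1 K, y k) = N ∧
        v = (∑ k ∈ Finset.Icc 2 K, y k * y (k - 1)) + y K}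
      (N * (N + 2) / 4) ∧
    (∑ k ∈ Finset.Icc 1 K, x k) = N ∧
    (∑ k ∈ Finset.Icc 2 K, x k * x (k - 1)) + x K = N * (N + 2) / 4 := by
  obtain ⟨m, rfl⟩ := heven
  have hval : (m + m) * (m + m + 2) / 4 = m * (m + 1) := by
    rw [show (m + m) * (m + m + 2) = 4 * (m * (m + 1)) by ring,
      Nat.mul_div_cancel_left _ four_pos]
  have hxK : x K = m := by rw [hxdef, if_pos rfl]; omega
  have hxK1 : x (K - 1) = m := by rw [hxdef, if_neg (by omega), if_pos rfl]; omega
  have hx : ∀ k ≤ K - 2, x k = 0 := fun k hk => by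
    rw [hxdef, if_neg (by omega), if_neg (by omega)]
  have hsum : ∑ k ∈ Icc 1 K, x k = m + m := by
    rw [sum_Icc_one_eq_of_eq_zero hK hx, hxK, hxK1]
  have hobj : ∑ k ∈ Icc 2 K, x k * x (k - 1) + x K = m * (m + 1) := by
    rw [sum_Icc_two_mul_pred_eq_of_eq_zero hK hx, hxK, hxK1, mul_add_one]
  refine ⟨⟨⟨x, hsum, by rw [hobj, hval]⟩, ?_⟩, hsum, hobj.trans hval.symm⟩
  rintro v ⟨y, hy, rfl⟩
  rw [hval]
  exact sum_Icc_mul_pred_add_le (by omega) (by omega)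
end

section
/- Let n ≥ 1 and K ≥ 1 be integers, and let n_1, …, n_K be positive integers. Let σ : ℝ → ℝ be convex and nondecreasing (for example, ReLU). Let W_1 ∈ ℝ^{n_1 × n}, W_k ∈ ℝ^{n_k × n_{k−1}} for k = 2,…,K, W_{K+1} ∈ ℝ^{1 × n_K}, D_k ∈ ℝ^{n_k × n} for k = 2,…,K, D_{K+1} ∈ ℝ^{1 × n}, and biases b_k ∈ ℝ^{n_k} for k = 1,…,K and b_{K+1} ∈ ℝ. Define z_1(x) = σ(W_1 x + b_1) (σ applied entrywise), z_k(x) = σ(W_k z_{k−1}(x) + b_k + D_k x) for k = 2,…,K, and φ̃(x) = W_{K+1} z_K(x) + b_{K+1} + D_{K+1} x. If all entries of W_1, …, W_{K+1} are nonnegative and all entries of D_2, …, D_K are nonnegative, then φ̃ : ℝ^n → ℝ is supermodular: for all x, y ∈ ℝ^n, φ̃(x ∨ y) + φ̃(x ∧ y) ≥ φ̃(x) + φ̃(y), where x ∨ y and x ∧ y denote the componentwise maximum and minimum. -/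
/-!
Each hidden unit is a monotone supermodular function of the input. The induction step rests on
one scalar fact: if `a ≤ b`, `a ≤ c` and `b + c ≤ a + d`, then `b` and `c` are convex combinations
of `a` and `b + c - a` with complementary weights, so a convex nondecreasing `σ` satisfies
`σ b + σ c ≤ σ a + σ d`. Applied with `a, b, c, d` the pre-activations at `x ⊓ y, x, y, x ⊔ y`, it
shows that `σ` preserves "monotone and supermodular"; nonnegative weights preserve it as well, and
the affine output passthrough is modular.
-/

open Set

lemma ConvexOn.map_add_map_le_of_add_eq {f : ℝ → ℝ} (hf : ConvexOn ℝ univ f) {a b c d : ℝ}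
    (hab : a ≤ b) (hac : a ≤ c) (h : b + c = a + d) : f b + f c ≤ f a + f d := by
  rcases hab.eq_or_lt with rfl | hlt
  · rw [show c = d by linarith]
  have hda : 0 < d - a := by linarith
  set t := (d - b) / (d - a)
  have ht : t * (d - a) = d - b := div_mul_cancel₀ _ hda.ne'
  have ht0 : 0 ≤ t := div_nonneg (by linarith) hda.le
  have ht1 : t ≤ 1 := (div_le_one hda).mpr (by linarith)
  have hb := hf.2 (mem_univ a) (mem_univ d) ht0 (sub_nonneg.mpr ht1) (add_sub_cancel t 1)
  have hc := hf.2 (mem_univ a) (mem_univ d) (sub_nonneg.mpr ht1) ht0 (sub_add_cancel 1 t)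
  simp only [smul_eq_mul] at hb hc
  rw [show t * a + (1 - t) * d = b by linear_combination -ht] at hb
  rw [show (1 - t) * a + t * d = c by linear_combination ht - h] at hc
  linarith

lemma ConvexOn.map_add_map_le_of_add_le {f : ℝ → ℝ} (hf : ConvexOn ℝ univ f) (hmono : Monotone f)
    {a b c d : ℝ} (hab : a ≤ b) (hac : a ≤ c) (h : b + c ≤ a + d) :
    f b + f c ≤ f a + f d :=
  (hf.map_add_map_le_of_add_eq hab hac (add_sub_cancel a (b + c)).symm).trans
    (add_le_add le_rfl (hmono (by linarith)))

def Supermodular {α : Type*} [Lattice α] (f : α → ℝ) : Prop :=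
  ∀ x y, f x + f y ≤ f (x ⊔ y) + f (x ⊓ y)

namespace Supermodular

variable {α : Type*} [Lattice α] {f g : α → ℝ}

lemma add (hf : Supermodular f) (hg : Supermodular g) : Supermodular fun x => f x + g x :=
  fun x y => by linarith [hf x y, hg x y]

lemma add_const (hf : Supermodular f) (c : ℝ) : Supermodular fun x => f x + c :=
  fun x y => by linarith [hf x y]

lemma sum_mul {ι : Type*} [Fintype ι] {c : ι → ℝ} (hc : ∀ j, 0 ≤ c j) {f : ι → α → ℝ}
    (hf : ∀ j, Supermodular (f j)) : Supermodular fun x => ∑ j, c j * f j x := fun x y => by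
  simp only [← Finset.sum_add_distrib, ← mul_add]
  exact Finset.sum_le_sum fun j _ => mul_le_mul_of_nonneg_left (hf j x y) (hc j)

lemma comp_of_convexOn {σ : ℝ → ℝ} (hσ : ConvexOn ℝ univ σ) (hσ_mono : Monotone σ)
    (hf : Supermodular f) (hf_mono : Monotone f) : Supermodular fun x => σ (f x) := fun x y => by
  have := hσ.map_add_map_le_of_add_le hσ_mono (hf_mono inf_le_left) (hf_mono inf_le_right)
    ((hf x y).trans_eq (add_comm _ _))
  linarith

end Supermodular

lemma supermodular_apply {ι : Type*} (j : ι) : Supermodular fun x : ι → ℝ => x j :=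
  fun x y => (max_add_min (x j) (y j)).ge

lemma supermodular_sum_mul_apply {ι : Type*} [Fintype ι] (c : ι → ℝ) :
    Supermodular fun x : ι → ℝ => ∑ j, c j * x j := fun x y => by
  simp only [← Finset.sum_add_distrib, ← mul_add]
  exact Finset.sum_le_sum fun j _ => (congrArg (c j * ·) (max_add_min (x j) (y j))).ge

lemma monotone_sum_mul {α ι : Type*} [Preorder α] [Fintype ι] {c : ι → ℝ} (hc : ∀ j, 0 ≤ c j)
    {f : ι → α → ℝ} (hf : ∀ j, Monotone (f j)) : Monotone fun x => ∑ j, c j * f j x :=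
  fun _ _ hxy => Finset.sum_le_sum fun j _ => mul_le_mul_of_nonneg_left (hf j hxy) (hc j)

/-- The hidden-layer outputs of a feedforward neural network with input passthrough:
`hiddenLayer σ d W D b x 0 = x` (the input) and
`hiddenLayer σ d W D b x (k+1) = σ(W_k ⬝ z_k + b_k + D_k ⬝ x)` entrywise.
Here `d k` is the width of layer `k` (with `d 0` the input dimension), `W k` is the weight
matrix from layer `k` to layer `k+1`, `D k` the passthrough matrix from the input to layer
`k+1`, and `b k` the bias of layer `k+1`. -/
noncomputable def hiddenLayer (σ : ℝ → ℝ) (d : ℕ → ℕ)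
    (W : ∀ k : ℕ, Matrix (Fin (d (k + 1))) (Fin (d k)) ℝ)
    (D : ∀ k : ℕ, Matrix (Fin (d (k + 1))) (Fin (d 0)) ℝ)
    (b : ∀ k : ℕ, Fin (d (k + 1)) → ℝ)
    (x : Fin (d 0) → ℝ) : ∀ k : ℕ, Fin (d k) → ℝ
  | 0 => x
  | k + 1 => fun i =>
      σ ((W k).mulVec (hiddenLayer σ d W D b x k) i + b k i + (D k).mulVec x i)

theorem hiddenLayer_monotone_supermodular {σ : ℝ → ℝ} (hσ : ConvexOn ℝ univ σ)
    (hσ_mono : Monotone σ) {d : ℕ → ℕ} {W : ∀ k : ℕ, Matrix (Fin (d (k + 1))) (Fin (d k)) ℝ}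
    {D : ∀ k : ℕ, Matrix (Fin (d (k + 1))) (Fin (d 0)) ℝ} {b : ∀ k : ℕ, Fin (d (k + 1)) → ℝ}
    {K : ℕ} (hW : ∀ k < K, ∀ i j, 0 ≤ W k i j) (hD : ∀ k < K, ∀ i j, 0 ≤ D k i j)
    {k : ℕ} (hk : k ≤ K) (i : Fin (d k)) :
    Monotone (fun x => hiddenLayer σ d W D b x k i) ∧
      Supermodular (fun x => hiddenLayer σ d W D b x k i) := by
  induction k with
  | zero => exact ⟨Function.monotone_eval i, supermodular_apply i⟩
  | succ k ih =>
    have hprev := fun j => ih (by omega) j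
    let pre := fun x => (∑ j, W k i j * hiddenLayer σ d W D b x k j) + b k i + ∑ j, D k i j * x j
    have hpre_mono : Monotone pre :=
      ((monotone_sum_mul (hW k hk i) fun j => (hprev j).1).add_const _).add
        (monotone_sum_mul (hD k hk i) Function.monotone_eval)
    have hpre_super : Supermodular pre :=
      ((Supermodular.sum_mul (hW k hk i) fun j => (hprev j).2).add_const _).add
        (Supermodular.sum_mul (hD k hk i) supermodular_apply)
    exact ⟨hσ_mono.comp hpre_mono, hpre_super.comp_of_convexOn hσ hσ_mono hpre_mono⟩

-- Paper ↔ Lean indexing: the paper's `W_k` is `W (k-1)`, `W_{K+1}` is `w`, `D_k` (`k ≥ 2`) is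
-- `D (k-1)` and `D_{K+1}` is `Dout`; the first layer has no passthrough (`D 0 = 0`).
theorem isnn_supermodular_general (K : ℕ) (d : ℕ → ℕ)
    (σ : ℝ → ℝ) (hσ_conv : ConvexOn ℝ Set.univ σ) (hσ_mono : Monotone σ)
    (W : ∀ k : ℕ, Matrix (Fin (d (k + 1))) (Fin (d k)) ℝ)
    (D : ∀ k : ℕ, Matrix (Fin (d (k + 1))) (Fin (d 0)) ℝ)
    (b : ∀ k : ℕ, Fin (d (k + 1)) → ℝ)
    (w : Fin (d K) → ℝ) (Dout : Fin (d 0) → ℝ) (bout : ℝ)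
    (hW : ∀ k, k ≤ K - 1 → ∀ i j, 0 ≤ W k i j)
    (hw : ∀ i, 0 ≤ w i)
    (hD1 : D 0 = 0)
    (hD : ∀ k, 1 ≤ k → k ≤ K - 1 → ∀ i j, 0 ≤ D k i j)
    (φ : (Fin (d 0) → ℝ) → ℝ)
    (hφ : ∀ x, φ x = (∑ i, w i * hiddenLayer σ d W D b x K i) + bout + ∑ j, Dout j * x j) :
    ∀ x y : Fin (d 0) → ℝ, φ x + φ y ≤ φ (x ⊔ y) + φ (x ⊓ y) := by
  have hD' : ∀ k < K, ∀ i j, 0 ≤ D k i j := fun k hk i j => by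
    rcases Nat.eq_zero_or_pos k with rfl | hk0
    · simp [hD1]
    · exact hD k hk0 (by omega) i j
  have hlast := hiddenLayer_monotone_supermodular (b := b) hσ_conv hσ_mono
    (fun k hk => hW k (by omega)) hD' le_rfl
  rw [show φ = _ from funext hφ]
  exact ((Supermodular.sum_mul hw fun i => (hlast i).2).add_const bout).add
    (supermodular_sum_mul_apply Dout)

/-- an input supermodular neural network (ISNN): if all the weight matrices
`W_1, …, W_{K+1}` are entrywise nonnegative, the passthrough matrices `D_2, …, D_K` are
entrywise nonnegative, the first layer has no passthrough (`D 0 = 0`), and the activation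
`σ` is convex and nondecreasing, then the network output `φ̃` is supermodular on `ℝ^n`.
(In our indexing, the paper's `W_k`, `k = 1, …, K`, is `W (k-1)`; `W_{K+1}` is the output
row vector `w`; the paper's `D_k`, `k = 2, …, K`, is `D (k-1)`; `D_{K+1}` is `Dout`.) -/
theorem isnn_supermodular (K : ℕ) (hK : 1 ≤ K) (d : ℕ → ℕ)
    (hd0 : 1 ≤ d 0) (hd : ∀ k, 1 ≤ k → k ≤ K → 1 ≤ d k)
    (σ : ℝ → ℝ) (hσ_conv : ConvexOn ℝ Set.univ σ) (hσ_mono : Monotone σ)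
    (W : ∀ k : ℕ, Matrix (Fin (d (k + 1))) (Fin (d k)) ℝ)
    (D : ∀ k : ℕ, Matrix (Fin (d (k + 1))) (Fin (d 0)) ℝ)
    (b : ∀ k : ℕ, Fin (d (k + 1)) → ℝ)
    (w : Fin (d K) → ℝ) (Dout : Fin (d 0) → ℝ) (bout : ℝ)
    (hW : ∀ k, k ≤ K - 1 → ∀ i j, 0 ≤ W k i j)
    (hw : ∀ i, 0 ≤ w i)
    (hD1 : D 0 = 0)
    (hD : ∀ k, 1 ≤ k → k ≤ K - 1 → ∀ i j, 0 ≤ D k i j)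
    (φ : (Fin (d 0) → ℝ) → ℝ)
    (hφ : ∀ x, φ x = (∑ i, w i * hiddenLayer σ d W D b x K i) + bout + ∑ j, Dout j * x j) :
    ∀ x y : Fin (d 0) → ℝ, φ x + φ y ≤ φ (x ⊔ y) + φ (x ⊓ y) :=
  isnn_supermodular_general K d σ hσ_conv hσ_mono W D b w Dout bout hW hw hD1 hD φ hφ
end

section
/- Let n be a positive integer, φ : {0,1}^n → ℝ an arbitrary function, and m_φ = min_{z ∈ {0,1}^n} φ(z). Then for every x ∈ {0,1}^n, φ(x) = m_φ + Σ_{z ∈ {0,1}^n} (φ(z) − m_φ) · max( Σ_{i=1}^{n} [ z_i x_i + (1 − z_i)(1 − x_i) ] − (n − 1), 0 ). In particular, every coefficient φ(z) − m_φ of a ReLU term is nonnegative, and every coefficient of x_i and of (1 − x_i) inside each ReLU is nonnegative, so φ is exactly represented by a one-hidden-layer ReLU network with nonnegative weights on the input (x, 1 − x). -/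
/-- ISNN universal approximation on the binary hypercube. With
`m_φ = min_{z ∈ {0,1}^n} φ(z)`, every `φ : {0,1}^n → ℝ` satisfies, for binary `x`,
`φ(x) = m_φ + Σ_{z ∈ {0,1}^n} (φ(z) − m_φ) · σ(Σ_i [z_i x_i + (1 − z_i)(1 − x_i)] − (n−1))`
with `σ = ReLU`; moreover all the coefficients `φ(z) − m_φ`, and all coefficients `z_i` of
`x_i` and `1 − z_i` of `1 − x_i` inside each ReLU, are nonnegative. -/
theorem isnn_universal_approximation (n : ℕ) (hn : 1 ≤ n) (φ : (Fin n → ℝ) → ℝ)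
    (m : ℝ)
    (hm : IsLeast (Set.range fun z : Fin n → Bool => φ fun i => if z i then 1 else 0) m) :
    (∀ x : Fin n → ℝ, (∀ i, x i = 0 ∨ x i = 1) →
      φ x = m + ∑ z : Fin n → Bool,
        (φ (fun i => if z i then 1 else 0) - m) *
          max ((∑ i, ((if z i then (1 : ℝ) else 0) * x i +
              (1 - if z i then (1 : ℝ) else 0) * (1 - x i))) - ((n : ℝ) - 1)) 0) ∧
    (∀ z : Fin n → Bool, 0 ≤ φ (fun i => if z i then 1 else 0) - m) ∧
    (∀ z : Fin n → Bool, ∀ i, (0 : ℝ) ≤ (if z i then (1 : ℝ) else 0) ∧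
      (0 : ℝ) ≤ 1 - (if z i then (1 : ℝ) else 0)) := by
  refine ⟨?_, ?_, ?_⟩
  · intro x hx
    set b : Fin n → Bool := fun i => decide (x i = 1) with hb
    have hxb : x = fun i => if b i then 1 else 0 := by
      funext i
      rcases hx i with h | h <;> simp [hb, h]
    -- inner sum per z
    have hinner : ∀ z : Fin n → Bool, ∀ i : Fin n,
        ((if z i then (1 : ℝ) else 0) * x i +
          (1 - if z i then (1 : ℝ) else 0) * (1 - x i))
          = if z i = b i then 1 else 0 := by
      intro z i
      rw [hxb]
      cases hzi : z i <;> cases hbi : b i <;> simp [hzi, hbi]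
    have hmax : ∀ z : Fin n → Bool,
        max ((∑ i, ((if z i then (1 : ℝ) else 0) * x i +
            (1 - if z i then (1 : ℝ) else 0) * (1 - x i))) - ((n : ℝ) - 1)) 0
          = if z = b then 1 else 0 := by
      intro z
      have hsum : (∑ i, ((if z i then (1 : ℝ) else 0) * x i +
          (1 - if z i then (1 : ℝ) else 0) * (1 - x i)))
          = ∑ i, (if z i = b i then (1 : ℝ) else 0) := by
        exact Finset.sum_congr rfl fun i _ => hinner z i
      rw [hsum]
      by_cases hzb : z = b
      · subst hzb
        simp
      · rw [if_neg hzb]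
        obtain ⟨j, hj⟩ : ∃ j, z j ≠ b j := by
          by_contra h
          push_neg at h
          exact hzb (funext h)
        have hle : (∑ i, (if z i = b i then (1 : ℝ) else 0)) ≤ (n : ℝ) - 1 := by
          have : (∑ i, (if z i = b i then (1 : ℝ) else 0))
              ≤ ∑ i, (if i = j then (0 : ℝ) else 1) := by
            apply Finset.sum_le_sum
            intro i _
            by_cases hij : i = j
            · subst hij; simp [hj]
            · simp [hij]
              split <;> norm_num
          calc (∑ i, (if z i = b i then (1 : ℝ) else 0))
              ≤ ∑ i, (if i = j then (0 : ℝ) else 1) := this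
            _ = (n : ℝ) - 1 := by
                calc (∑ i, (if i = j then (0 : ℝ) else 1))
                    = ∑ i, ((1 : ℝ) - if i = j then 1 else 0) :=
                      Finset.sum_congr rfl (fun i _ => by split <;> ring)
                  _ = (n : ℝ) - 1 := by
                      rw [Finset.sum_sub_distrib,
                        Finset.sum_ite_eq' Finset.univ j fun _ => (1 : ℝ)]
                      simp
        have : (∑ i, (if z i = b i then (1 : ℝ) else 0)) - ((n : ℝ) - 1) ≤ 0 := by
          linarith
        exact max_eq_right this
    have hsum2 : (∑ z : Fin n → Bool,
        (φ (fun i => if z i then 1 else 0) - m) *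
          max ((∑ i, ((if z i then (1 : ℝ) else 0) * x i +
              (1 - if z i then (1 : ℝ) else 0) * (1 - x i))) - ((n : ℝ) - 1)) 0)
        = φ (fun i => if b i then 1 else 0) - m := by
      rw [Finset.sum_congr rfl fun z _ => by rw [hmax z]]
      rw [Finset.sum_eq_single b]
      · simp
      · intro z _ hzb; simp [hzb]
      · intro h; exact absurd (Finset.mem_univ b) h
    rw [hsum2, ← hxb]
    ring
  · intro z
    have := hm.2 ⟨z, rfl⟩
    linarith
  · intro z i
    constructor <;> split <;> norm_num
end

section
/- Let m be a positive integer and let φ be a supermodular set function on subsets of {1,…,m}, i.e., φ(S ∪ T) + φ(S ∩ T) ≥ φ(S) + φ(T) for all S, T ⊆ {1,…,m}. For S ⊆ {1,…,m} and k ∉ S, define ρ(S, k) = φ(S ∪ {k}) − φ(S). Then for all S, T ⊆ {1,…,m}, φ(T) ≥ φ(S) − Σ_{k ∈ S \ T} [ φ({1,…,m}) − φ({1,…,m} \ {k}) ] + Σ_{k ∈ T \ S} [ φ(S ∪ {k}) − φ(S) ]. -/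
/-! Supermodularity makes marginal values increasing along `⊆`. Hence adding the elements of
`T \ S` to `S` one at a time gains at least their marginals at `S`, and removing the elements of
`S \ T` from `S ∪ T` loses at most their marginals at the full set; chain `S → S ∪ T → T`. -/

open Finset

variable {α : Type*} [DecidableEq α]

def IsSupermodular (φ : Finset α → ℝ) : Prop :=
  ∀ S T, φ S + φ T ≤ φ (S ∪ T) + φ (S ∩ T)

namespace IsSupermodular

variable {φ : Finset α → ℝ} (hφ : IsSupermodular φ)
include hφ

theorem marginal_mono {A B : Finset α} (hAB : A ⊆ B) {k : α} (hk : k ∉ B) :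
    φ (insert k A) - φ A ≤ φ (insert k B) - φ B := by
  have h := hφ (insert k A) B
  rw [insert_union, union_eq_right.mpr hAB, insert_inter_of_notMem hk,
    inter_eq_left.mpr hAB] at h
  linarith

theorem add_sum_marginal_le_union {S D : Finset α} (hD : Disjoint D S) :
    φ S + ∑ k ∈ D, (φ (insert k S) - φ S) ≤ φ (S ∪ D) := by
  induction D using Finset.induction_on with
  | empty => simp
  | insert a D ha ih =>
    obtain ⟨haS, hDS⟩ := disjoint_insert_left.mp hD
    have hmono :=
      hφ.marginal_mono (subset_union_left (s₁ := S) (s₂ := D)) (k := a) (by simp [ha, haS])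
    rw [sum_insert ha, union_insert]
    linarith [ih hDS]

theorem union_sub_sum_marginal_le {U V D : Finset α} (hD : Disjoint D V) (hU : V ∪ D ⊆ U) :
    φ (V ∪ D) - ∑ k ∈ D, (φ U - φ (U.erase k)) ≤ φ V := by
  induction D using Finset.induction_on with
  | empty => simp
  | insert a D ha ih =>
    obtain ⟨haV, hDV⟩ := disjoint_insert_left.mp hD
    rw [union_insert] at hU ⊢
    have hsub : V ∪ D ⊆ U.erase a :=
      subset_erase.mpr ⟨(subset_insert a _).trans hU, by simp [ha, haV]⟩
    have hmono := hφ.marginal_mono hsub (notMem_erase a U)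
    rw [insert_erase (insert_subset_iff.mp hU).1] at hmono
    rw [sum_insert ha]
    linarith [ih hDV ((subset_insert a _).trans hU)]

end IsSupermodular

theorem supermodular_cut_valid_general (m : ℕ) (φ : Finset (Fin m) → ℝ)
    (hsuper : ∀ S T : Finset (Fin m), φ S + φ T ≤ φ (S ∪ T) + φ (S ∩ T)) :
    ∀ S T : Finset (Fin m),
      φ S - (∑ k ∈ S \ T, (φ Finset.univ - φ (Finset.univ.erase k))) +
          (∑ k ∈ T \ S, (φ (insert k S) - φ S)) ≤ φ T := by
  intro S T
  have hφ : IsSupermodular φ := hsuper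
  have hgain := hφ.add_sum_marginal_le_union (sdiff_disjoint : Disjoint (T \ S) S)
  have hloss := hφ.union_sub_sum_marginal_le (sdiff_disjoint : Disjoint (S \ T) T) (subset_univ _)
  rw [union_sdiff_self_eq_union] at hgain
  rw [union_sdiff_self_eq_union, union_comm] at hloss
  linarith

/-- for a supermodular set function `φ` on subsets of `{1,…,m}` with marginal
values `ρ(S,k) = φ(S ∪ {k}) − φ(S)`, every pair of subsets `S, T` satisfies
`φ(T) ≥ φ(S) − Σ_{k ∈ S\T} ρ([m]\{k}, k) + Σ_{k ∈ T\S} ρ(S, k)`. -/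
theorem supermodular_cut_valid (m : ℕ) (hm : 1 ≤ m) (φ : Finset (Fin m) → ℝ)
    (hsuper : ∀ S T : Finset (Fin m), φ S + φ T ≤ φ (S ∪ T) + φ (S ∩ T)) :
    ∀ S T : Finset (Fin m),
      φ S - (∑ k ∈ S \ T, (φ Finset.univ - φ (Finset.univ.erase k))) +
          (∑ k ∈ T \ S, (φ (insert k S) - φ S)) ≤ φ T :=
  supermodular_cut_valid_general m φ hsuper
end
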